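/- Let 0 < L_- <= L_+ and let phi : (0,infty) x R -> R be a continuous function with compact support contained in {(r,z) : r > 0}, odd in z (phi(r,-z) = -phi(r,z)), with phi <= 0 on {z > 0}, phi not identically zero on {z > 0}, and with supp(phi) intersect {z > 0} contained in the cone {(r,z) : L_- r <= z <= L_+ r}. For Gamma > 0 define Lambda(Gamma) := Integral_{z in R} Integral_{r in (0,infty)} r^2 z (r^2 + Gamma^2 z^2)^{-5/2} (-phi(r,z)) dr dz. Then for every Gamma in (0,1]: Lambda(Gamma) > 0; Lambda is differentiable at Gamma with Lambda'(Gamma) = -5 Gamma Integral_{z in R} Integral_{r in (0,infty)} r^2 z^3 (r^2 + Gamma^2 z^2)^{-7/2} (-phi(r,z)) dr dz <= 0; and 5 + 3 Gamma Lambda'(Gamma)/Lambda(Gamma) <= 5 - 15 (Gamma L_-)^2 / (1 + (Gamma L_-)^2). -/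

import Mathlib

noncomputable section

open Real Set MeasureTheory

private lemma cont_mul_aux {f ψ : ℝ × ℝ → ℝ} (hf : ContinuousOn f {p : ℝ × ℝ | 0 < p.1})
    (hψ : Continuous ψ) (hψs : tsupport ψ ⊆ {p : ℝ × ℝ | 0 < p.1}) :
    Continuous fun p => f p * ψ p := by
  rw [continuous_iff_continuousAt]
  intro p
  by_cases hp : 0 < p.1
  · exact (hf.continuousAt ((isOpen_lt continuous_const continuous_fst).mem_nhds hp)).mul
      hψ.continuousAt
  · have hp' : p ∉ tsupport ψ := fun h => hp (hψs h)
    rw [notMem_tsupport_iff_eventuallyEq] at hp'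
    have h0 : (fun p => f p * ψ p) =ᶠ[nhds p] fun _ => 0 := by
      filter_upwards [hp'] with q hq
      simp only [hq]
      simp
    exact h0.continuousAt

private lemma cont_ker_aux (Γ e : ℝ) {g : ℝ → ℝ} (hg : Continuous g) :
    ContinuousOn (fun p : ℝ × ℝ => p.1 ^ 2 * g p.2 * (p.1 ^ 2 + Γ ^ 2 * p.2 ^ 2) ^ e)
      {p : ℝ × ℝ | 0 < p.1} := by
  apply ContinuousOn.mul
  · exact ((continuous_fst.pow 2).continuousOn.mul (hg.comp continuous_snd).continuousOn)
  · apply ContinuousOn.rpow_const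
    · exact ((continuous_fst.pow 2).add (continuous_const.mul (continuous_snd.pow 2))).continuousOn
    · intro p hp
      left
      have hp1 : (0:ℝ) < p.1 := hp
      nlinarith [sq_nonneg (Γ * p.2)]

private lemma iterated_eq_prod {f : ℝ × ℝ → ℝ} (h0 : ∀ p : ℝ × ℝ, p.1 ≤ 0 → f p = 0)
    (hf : Integrable f ((volume : Measure ℝ).prod volume)) :
    (∫ z : ℝ, ∫ r in Ioi (0:ℝ), f (r, z)) = ∫ p, f p ∂((volume : Measure ℝ).prod volume) := by
  have h1 : ∀ z : ℝ, (∫ r in Ioi (0:ℝ), f (r, z)) = ∫ r : ℝ, f (r, z) := fun z =>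
    setIntegral_eq_integral_of_forall_compl_eq_zero fun r hr => h0 (r, z) (by simpa using hr)
  simp_rw [h1]
  have h2 : Integrable (Function.uncurry fun z r => f (r, z))
      ((volume : Measure ℝ).prod volume) := hf.swap
  have := MeasureTheory.integral_integral_symm (f := fun z r => f (r, z)) h2
  simpa using this


/-- The localized Biot–Savart coefficient
`Λ(Γ) = ∫_ℝ ∫_{(0,∞)} r² z (r² + Γ² z²)^(-5/2) (-φ(r,z)) dr dz`. -/
def Lam (φ : ℝ × ℝ → ℝ) (Γ : ℝ) : ℝ :=
  ∫ z : ℝ, ∫ r in Ioi (0 : ℝ),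
    r ^ 2 * z * ((r ^ 2 + Γ ^ 2 * z ^ 2) ^ (-(5 : ℝ) / 2)) * (-φ (r, z))

/-- The candidate derivative
`Λ'(Γ) = -5Γ ∫_ℝ ∫_{(0,∞)} r² z³ (r² + Γ² z²)^(-7/2) (-φ(r,z)) dr dz`. -/
def LamD (φ : ℝ × ℝ → ℝ) (Γ : ℝ) : ℝ :=
  -5 * Γ * ∫ z : ℝ, ∫ r in Ioi (0 : ℝ),
    r ^ 2 * z ^ 3 * ((r ^ 2 + Γ ^ 2 * z ^ 2) ^ (-(7 : ℝ) / 2)) * (-φ (r, z))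

set_option maxHeartbeats 2000000 in
/-- Let `0 < L₋ ≤ L₊` and let `φ` be a continuous function with compact
support contained in `{r > 0}`, odd in `z`, nonpositive on `{z > 0}`, not identically zero
on `{z > 0}`, and with `supp φ ∩ {z > 0}` contained in the cone `{L₋ r ≤ z ≤ L₊ r}`.  Then
for every `Γ ∈ (0,1]`: `Λ(Γ) > 0`; `Λ` is differentiable at `Γ` with derivative
`Λ'(Γ) = -5Γ ∫∫ r² z³ (r² + Γ² z²)^(-7/2) (-φ) dr dz ≤ 0`; and
`5 + 3 Γ Λ'(Γ)/Λ(Γ) ≤ 5 - 15 (Γ L₋)²/(1 + (Γ L₋)²)`. -/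
theorem localized_coefficient_properties (Lm Lp : ℝ) (hLm : 0 < Lm) (hLmp : Lm ≤ Lp)
    (φ : ℝ × ℝ → ℝ)
    (hcont : Continuous φ) (hsupp : HasCompactSupport φ)
    (hsuppr : tsupport φ ⊆ {p : ℝ × ℝ | 0 < p.1})
    (hodd : ∀ r z : ℝ, φ (r, -z) = -φ (r, z))
    (hsign : ∀ r z : ℝ, 0 < z → φ (r, z) ≤ 0)
    (hne : ∃ r z : ℝ, 0 < z ∧ φ (r, z) ≠ 0)
    (hcone : ∀ p ∈ tsupport φ, 0 < p.2 → Lm * p.1 ≤ p.2 ∧ p.2 ≤ Lp * p.1) :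
    ∀ Γ ∈ Ioc (0 : ℝ) 1,
      0 < Lam φ Γ ∧
      HasDerivAt (Lam φ) (LamD φ Γ) Γ ∧
      LamD φ Γ ≤ 0 ∧
      5 + 3 * Γ * LamD φ Γ / Lam φ Γ ≤ 5 - 15 * (Γ * Lm) ^ 2 / (1 + (Γ * Lm) ^ 2) := by
  classical
  set μ2 : Measure (ℝ × ℝ) := (volume : Measure ℝ).prod volume with hμ2
  have hvol : (volume : Measure (ℝ × ℝ)) = μ2 := Measure.volume_eq_prod ℝ ℝ
  -- basic sign facts
  have hr0 : ∀ p : ℝ × ℝ, φ p ≠ 0 → 0 < p.1 := fun p hp =>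
    hsuppr (subset_tsupport φ hp)
  have h0 : ∀ p : ℝ × ℝ, p.1 ≤ 0 → φ p = 0 := by
    intro p hp
    by_contra h
    exact absurd (hr0 p h) (not_lt.mpr hp)
  have hz00 : ∀ r : ℝ, φ (r, 0) = 0 := by
    intro r
    have h := hodd r 0
    rw [neg_zero] at h
    linarith
  have hzX : ∀ p : ℝ × ℝ, 0 ≤ p.2 * (-φ p) := by
    rintro ⟨r, z⟩
    simp only
    rcases lt_trichotomy z 0 with hz | hz | hz
    · have h1 : φ (r, z) = -φ (r, -z) := by
        rw [← hodd r (-z), neg_neg]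
      have h2 : φ (r, -z) ≤ 0 := hsign r (-z) (by linarith)
      nlinarith
    · simp [hz, hz00 r]
    · have := hsign r z hz
      nlinarith
  have habs : ∀ p : ℝ × ℝ, φ p ≠ 0 → Lm * p.1 ≤ |p.2| := by
    rintro ⟨r, z⟩ hp
    rcases lt_trichotomy z 0 with hz | hz | hz
    · have h1 : φ (r, -z) ≠ 0 := by
        rw [hodd]
        simpa using hp
      have h2 := hcone (r, -z) (subset_tsupport φ h1) (by simpa using hz)
      rw [abs_of_neg hz]
      exact h2.1
    · subst hz
      exact absurd (hz00 r) hp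
    · have h2 := hcone (r, z) (subset_tsupport φ hp) hz
      rw [abs_of_pos hz]
      exact h2.1
  -- kernels
  set F5 : ℝ → ℝ × ℝ → ℝ := fun Γ p =>
    p.1 ^ 2 * p.2 * ((p.1 ^ 2 + Γ ^ 2 * p.2 ^ 2) ^ (-(5 : ℝ) / 2)) * (-φ p) with hF5
  set F7 : ℝ → ℝ × ℝ → ℝ := fun Γ p =>
    p.1 ^ 2 * p.2 ^ 3 * ((p.1 ^ 2 + Γ ^ 2 * p.2 ^ 2) ^ (-(7 : ℝ) / 2)) * (-φ p) with hF7
  have htsneg : tsupport (fun p : ℝ × ℝ => -φ p) ⊆ {p : ℝ × ℝ | 0 < p.1} := by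
    have : Function.support (fun p : ℝ × ℝ => -φ p) = Function.support φ := by
      ext p; simp
    rw [tsupport, this]
    exact hsuppr
  have cont5 : ∀ Γ : ℝ, Continuous (F5 Γ) := by
    intro Γ
    rw [hF5]
    exact cont_mul_aux (cont_ker_aux Γ (-(5:ℝ)/2) (continuous_pow 1) |>.congr
        (fun p _ => by simp only [pow_one])) hcont.neg htsneg
  have cont7 : ∀ Γ : ℝ, Continuous (F7 Γ) := by
    intro Γ
    rw [hF7]
    exact cont_mul_aux (cont_ker_aux Γ (-(7:ℝ)/2) (continuous_pow 3)) hcont.neg htsneg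
  have hcs5 : ∀ Γ : ℝ, HasCompactSupport (F5 Γ) := by
    intro Γ
    apply hsupp.mono
    intro p hp
    simp only [Function.mem_support] at hp ⊢
    intro hφp
    exact hp (by rw [hF5]; simp [hφp])
  have hcs7 : ∀ Γ : ℝ, HasCompactSupport (F7 Γ) := by
    intro Γ
    apply hsupp.mono
    intro p hp
    simp only [Function.mem_support] at hp ⊢
    intro hφp
    exact hp (by rw [hF7]; simp [hφp])
  have int5 : ∀ Γ : ℝ, Integrable (F5 Γ) μ2 := fun Γ =>
    hvol ▸ ((cont5 Γ).integrable_of_hasCompactSupport (hcs5 Γ))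
  have int7 : ∀ Γ : ℝ, Integrable (F7 Γ) μ2 := fun Γ =>
    hvol ▸ ((cont7 Γ).integrable_of_hasCompactSupport (hcs7 Γ))
  have vanish5 : ∀ Γ : ℝ, ∀ p : ℝ × ℝ, p.1 ≤ 0 → F5 Γ p = 0 := by
    intro Γ p hp
    rw [hF5]
    simp [h0 p hp]
  have vanish7 : ∀ Γ : ℝ, ∀ p : ℝ × ℝ, p.1 ≤ 0 → F7 Γ p = 0 := by
    intro Γ p hp
    rw [hF7]
    simp [h0 p hp]
  have LamEq : ∀ Γ : ℝ, Lam φ Γ = ∫ p, F5 Γ p ∂μ2 := by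
    intro Γ
    rw [Lam, hμ2]
    exact iterated_eq_prod (vanish5 Γ) (int5 Γ)
  have LamDEq : ∀ Γ : ℝ, LamD φ Γ = -5 * Γ * ∫ p, F7 Γ p ∂μ2 := by
    intro Γ
    rw [LamD, hμ2]
    congr 1
    exact iterated_eq_prod (vanish7 Γ) (int7 Γ)
  -- nonnegativity
  have nonneg5 : ∀ Γ : ℝ, ∀ p : ℝ × ℝ, 0 ≤ F5 Γ p := by
    intro Γ p
    have h1 := hzX p
    have h2 : (0:ℝ) ≤ (p.1 ^ 2 + Γ ^ 2 * p.2 ^ 2) ^ (-(5:ℝ)/2) :=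
      Real.rpow_nonneg (by positivity) _
    have h3 := mul_nonneg (mul_nonneg (sq_nonneg p.1) h2) h1
    rw [hF5]
    simp only
    nlinarith [h3]
  have nonneg7 : ∀ Γ : ℝ, ∀ p : ℝ × ℝ, 0 ≤ F7 Γ p := by
    intro Γ p
    have h1 := hzX p
    have h2 : (0:ℝ) ≤ (p.1 ^ 2 + Γ ^ 2 * p.2 ^ 2) ^ (-(7:ℝ)/2) :=
      Real.rpow_nonneg (by positivity) _
    have h3 := mul_nonneg (mul_nonneg (mul_nonneg (sq_nonneg p.1) h2) (sq_nonneg p.2)) h1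
    rw [hF7]
    simp only
    nlinarith [h3]
  -- now fix Γ
  rintro Γ ⟨hΓ0, hΓ1⟩
  -- positivity of Lam
  have hI5pos : 0 < ∫ p, F5 Γ p ∂μ2 := by
    rw [integral_pos_iff_support_of_nonneg (fun p => nonneg5 Γ p) (int5 Γ)]
    have hopen : IsOpen (Function.support (F5 Γ)) := by
      rw [Function.support_eq_preimage]
      exact isOpen_compl_singleton.preimage (cont5 Γ)
    obtain ⟨r0, z0, hz0pos, hφ0⟩ := hne
    have hr0pos : 0 < r0 := hr0 (r0, z0) hφ0
    have hRpos : (0:ℝ) < r0 ^ 2 + Γ ^ 2 * z0 ^ 2 := by nlinarith [sq_nonneg (Γ * z0)]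
    have hXpos : 0 < -φ (r0, z0) := by
      have := hsign r0 z0 hz0pos
      rcases lt_or_eq_of_le this with h | h
      · linarith
      · exact absurd h hφ0
    have hF5pos : 0 < F5 Γ (r0, z0) := by
      rw [hF5]
      exact mul_pos (mul_pos (mul_pos (pow_pos hr0pos 2) hz0pos)
        (Real.rpow_pos_of_pos hRpos _)) hXpos
    exact hopen.measure_pos μ2 ⟨(r0, z0), ne_of_gt hF5pos⟩
  have hLampos : 0 < Lam φ Γ := by
    rw [LamEq Γ]
    exact hI5pos
  refine ⟨hLampos, ?_, ?_, ?_⟩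
  · -- derivative
    have hball : ∀ s ∈ Metric.ball Γ (Γ/2), Γ/2 < s ∧ s < 2 := by
      intro s hs
      rw [Metric.mem_ball, Real.dist_eq, abs_lt] at hs
      constructor <;> linarith
    have h_diff : ∀ p : ℝ × ℝ, ∀ s ∈ Metric.ball Γ (Γ/2),
        HasDerivAt (fun t => F5 t p) ((-5 * s) * F7 s p) s := by
      intro p s hs
      by_cases hφp : φ p = 0
      · have he1 : (fun t => F5 t p) = fun _ => (0:ℝ) := by
          funext t
          rw [hF5]
          simp [hφp]
        have he2 : (-5 * s) * F7 s p = 0 := by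
          rw [hF7]
          simp [hφp]
        rw [he1, he2]
        exact hasDerivAt_const s 0
      · have hr : 0 < p.1 := hr0 p hφp
        have hu : HasDerivAt (fun t : ℝ => p.1 ^ 2 + t ^ 2 * p.2 ^ 2) (2 * s * p.2 ^ 2) s := by
          simpa using ((hasDerivAt_pow 2 s).mul_const (p.2 ^ 2)).const_add (p.1 ^ 2)
        have hR : (0:ℝ) < p.1 ^ 2 + s ^ 2 * p.2 ^ 2 := by nlinarith [sq_nonneg (s * p.2)]
        have hrpow : HasDerivAt (fun t : ℝ => (p.1 ^ 2 + t ^ 2 * p.2 ^ 2) ^ (-(5:ℝ)/2))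
            ((-(5:ℝ)/2) * (p.1 ^ 2 + s ^ 2 * p.2 ^ 2) ^ (-(5:ℝ)/2 - 1) * (2 * s * p.2 ^ 2)) s :=
          by have h := (Real.hasDerivAt_rpow_const (p := -(5:ℝ)/2) (Or.inl (ne_of_gt hR))).comp s hu; exact h
        have h3 := (hrpow.const_mul (p.1 ^ 2 * p.2)).mul_const (-φ p)
        have hexp : (p.1 ^ 2 + s ^ 2 * p.2 ^ 2) ^ (-(5:ℝ)/2 - 1)
            = (p.1 ^ 2 + s ^ 2 * p.2 ^ 2) ^ (-(7:ℝ)/2) := by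
          norm_num
        have hval : p.1 ^ 2 * p.2 * ((-(5:ℝ)/2) * (p.1 ^ 2 + s ^ 2 * p.2 ^ 2) ^ (-(5:ℝ)/2 - 1)
            * (2 * s * p.2 ^ 2)) * (-φ p) = (-5 * s) * F7 s p := by
          rw [hexp, hF7]
          ring
        rw [← hval]
        exact h3
    have h_bound : ∀ p : ℝ × ℝ, ∀ s ∈ Metric.ball Γ (Γ/2),
        ‖(-5 * s) * F7 s p‖ ≤ (10 * (p.1 ^ 2 * |p.2| ^ 3 *
          ((p.1 ^ 2 + (Γ/2) ^ 2 * p.2 ^ 2) ^ (-(7:ℝ)/2)))) * |φ p| := by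
      intro p s hs
      obtain ⟨hs1, hs2⟩ := hball s hs
      have hspos : 0 < s := lt_trans (by linarith) hs1
      by_cases hφp : φ p = 0
      · rw [hF7]
        simp [hφp]
      · have hr : 0 < p.1 := hr0 p hφp
        have hR2 : (0:ℝ) < p.1 ^ 2 + (Γ/2) ^ 2 * p.2 ^ 2 := by
          nlinarith [sq_nonneg ((Γ/2) * p.2)]
        have hmono : (p.1 ^ 2 + s ^ 2 * p.2 ^ 2) ^ (-(7:ℝ)/2)
            ≤ (p.1 ^ 2 + (Γ/2) ^ 2 * p.2 ^ 2) ^ (-(7:ℝ)/2) := by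
          apply Real.rpow_le_rpow_of_nonpos hR2 _ (by norm_num)
          have hss : (Γ/2) ^ 2 ≤ s ^ 2 := by nlinarith
          nlinarith [mul_le_mul_of_nonneg_right hss (sq_nonneg p.2)]
        have hRes : (0:ℝ) ≤ (p.1 ^ 2 + s ^ 2 * p.2 ^ 2) ^ (-(7:ℝ)/2) :=
          Real.rpow_nonneg (by positivity) _
        have eA : |F7 s p| = p.1 ^ 2 * |p.2| ^ 3 *
            ((p.1 ^ 2 + s ^ 2 * p.2 ^ 2) ^ (-(7:ℝ)/2)) * |φ p| := by
          rw [hF7]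
          simp only
          rw [abs_mul, abs_mul, abs_mul, abs_of_nonneg (sq_nonneg p.1), abs_pow,
            abs_of_nonneg hRes, abs_neg]
        have eB : |(-5 : ℝ) * s| = 5 * s := by
          rw [abs_of_nonpos (by nlinarith : (-5 : ℝ) * s ≤ 0)]
          ring
        have e0 : ‖(-5 * s) * F7 s p‖ = (5 * s) * (p.1 ^ 2 * |p.2| ^ 3 *
            ((p.1 ^ 2 + s ^ 2 * p.2 ^ 2) ^ (-(7:ℝ)/2)) * |φ p|) := by
          rw [Real.norm_eq_abs, abs_mul, eA, eB]
        rw [e0]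
        have hA : (0:ℝ) ≤ p.1 ^ 2 * |p.2| ^ 3 *
            ((p.1 ^ 2 + s ^ 2 * p.2 ^ 2) ^ (-(7:ℝ)/2)) * |φ p| := by positivity
        have hB : p.1 ^ 2 * |p.2| ^ 3 * ((p.1 ^ 2 + s ^ 2 * p.2 ^ 2) ^ (-(7:ℝ)/2)) * |φ p|
            ≤ p.1 ^ 2 * |p.2| ^ 3 * ((p.1 ^ 2 + (Γ/2) ^ 2 * p.2 ^ 2) ^ (-(7:ℝ)/2)) * |φ p| := by
          apply mul_le_mul_of_nonneg_right _ (abs_nonneg _)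
          exact mul_le_mul_of_nonneg_left hmono (by positivity)
        calc (5 * s) * (p.1 ^ 2 * |p.2| ^ 3 *
            ((p.1 ^ 2 + s ^ 2 * p.2 ^ 2) ^ (-(7:ℝ)/2)) * |φ p|)
            ≤ 10 * (p.1 ^ 2 * |p.2| ^ 3 *
              ((p.1 ^ 2 + s ^ 2 * p.2 ^ 2) ^ (-(7:ℝ)/2)) * |φ p|) :=
              mul_le_mul_of_nonneg_right (by linarith) hA
          _ ≤ 10 * (p.1 ^ 2 * |p.2| ^ 3 *
              ((p.1 ^ 2 + (Γ/2) ^ 2 * p.2 ^ 2) ^ (-(7:ℝ)/2)) * |φ p|) := by linarith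
          _ = (10 * (p.1 ^ 2 * |p.2| ^ 3 *
              ((p.1 ^ 2 + (Γ/2) ^ 2 * p.2 ^ 2) ^ (-(7:ℝ)/2)))) * |φ p| := by ring
    have hbndcont : Continuous (fun p : ℝ × ℝ => (10 * (p.1 ^ 2 * |p.2| ^ 3 *
        ((p.1 ^ 2 + (Γ/2) ^ 2 * p.2 ^ 2) ^ (-(7:ℝ)/2)))) * |φ p|) := by
      have hts : tsupport (fun p : ℝ × ℝ => |φ p|) ⊆ {p : ℝ × ℝ | 0 < p.1} := by
        have : Function.support (fun p : ℝ × ℝ => |φ p|) = Function.support φ := by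
          ext p; simp
        rw [tsupport, this]
        exact hsuppr
      have hker : ContinuousOn (fun p : ℝ × ℝ => (10:ℝ) * (p.1 ^ 2 * |p.2| ^ 3 *
          ((p.1 ^ 2 + (Γ/2) ^ 2 * p.2 ^ 2) ^ (-(7:ℝ)/2)))) {p : ℝ × ℝ | 0 < p.1} := by
        have h := cont_ker_aux (Γ/2) (-(7:ℝ)/2) (g := fun z : ℝ => |z| ^ 3)
          (continuous_abs.pow 3)
        exact continuousOn_const.mul h
      exact cont_mul_aux hker hcont.abs hts
    have hbndcs : HasCompactSupport (fun p : ℝ × ℝ => (10 * (p.1 ^ 2 * |p.2| ^ 3 *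
        ((p.1 ^ 2 + (Γ/2) ^ 2 * p.2 ^ 2) ^ (-(7:ℝ)/2)))) * |φ p|) := by
      apply hsupp.mono
      intro p hp
      simp only [Function.mem_support] at hp ⊢
      intro hφp
      exact hp (by simp [hφp])
    have hbndint : Integrable (fun p : ℝ × ℝ => (10 * (p.1 ^ 2 * |p.2| ^ 3 *
        ((p.1 ^ 2 + (Γ/2) ^ 2 * p.2 ^ 2) ^ (-(7:ℝ)/2)))) * |φ p|) μ2 :=
      hvol ▸ (hbndcont.integrable_of_hasCompactSupport hbndcs)
    have hder := hasDerivAt_integral_of_dominated_loc_of_deriv_le (μ := μ2)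
      (F := fun s p => F5 s p) (F' := fun s p => (-5 * s) * F7 s p) (x₀ := Γ)
      (Metric.ball_mem_nhds Γ (half_pos hΓ0))
      (Filter.Eventually.of_forall fun s => (cont5 s).aestronglyMeasurable)
      (int5 Γ)
      ((continuous_const.mul (cont7 Γ)).aestronglyMeasurable)
      (Filter.Eventually.of_forall fun p => h_bound p)
      hbndint
      (Filter.Eventually.of_forall fun p => h_diff p)
    have hfun : Lam φ = fun s => ∫ p, F5 s p ∂μ2 := funext LamEq
    have hval : (∫ p, (-5 * Γ) * F7 Γ p ∂μ2) = LamD φ Γ := by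
      rw [integral_const_mul, LamDEq Γ]
    rw [hfun, ← hval]
    exact hder.2
  · -- LamD ≤ 0
    have hI7 : 0 ≤ ∫ p, F7 Γ p ∂μ2 := integral_nonneg (nonneg7 Γ)
    rw [LamDEq Γ]
    nlinarith
  · -- final inequality
    have hkey : ∀ p : ℝ × ℝ,
        ((Γ * Lm) ^ 2 / (1 + (Γ * Lm) ^ 2)) * F5 Γ p ≤ Γ ^ 2 * F7 Γ p := by
      intro p
      by_cases hφp : φ p = 0
      · rw [hF5, hF7]
        simp [hφp]
      · have hr : 0 < p.1 := hr0 p hφp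
        have hLz := habs p hφp
        have hR : (0:ℝ) < p.1 ^ 2 + Γ ^ 2 * p.2 ^ 2 := by nlinarith [sq_nonneg (Γ * p.2)]
        have h75 : (p.1 ^ 2 + Γ ^ 2 * p.2 ^ 2) ^ (-(5:ℝ)/2)
            = (p.1 ^ 2 + Γ ^ 2 * p.2 ^ 2) * (p.1 ^ 2 + Γ ^ 2 * p.2 ^ 2) ^ (-(7:ℝ)/2) := by
          have h := Real.rpow_add hR 1 (-(7:ℝ)/2)
          rw [Real.rpow_one] at h
          rw [show (-(5:ℝ)/2) = 1 + (-(7:ℝ)/2) by norm_num, h]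
        have hz2 : (Lm * p.1) ^ 2 ≤ p.2 ^ 2 := by
          have h1 : (Lm * p.1) ^ 2 ≤ |p.2| ^ 2 :=
            pow_le_pow_left₀ (by positivity) hLz 2
          rwa [sq_abs] at h1
        have hc : ((Γ * Lm) ^ 2 / (1 + (Γ * Lm) ^ 2)) * (p.1 ^ 2 + Γ ^ 2 * p.2 ^ 2)
            ≤ Γ ^ 2 * p.2 ^ 2 := by
          rw [div_mul_eq_mul_div, div_le_iff₀ (by positivity)]
          nlinarith [mul_le_mul_of_nonneg_left hz2 (sq_nonneg Γ), sq_nonneg (Γ * p.2),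
            sq_nonneg (Γ * Lm * Γ * p.2)]
        have hS : (0:ℝ) ≤ p.1 ^ 2 * ((p.1 ^ 2 + Γ ^ 2 * p.2 ^ 2) ^ (-(7:ℝ)/2))
            * (p.2 * (-φ p)) :=
          mul_nonneg (mul_nonneg (sq_nonneg _) (Real.rpow_nonneg (le_of_lt hR) _)) (hzX p)
        have hfin := mul_le_mul_of_nonneg_right hc hS
        rw [hF5, hF7]
        simp only
        rw [h75]
        nlinarith [hfin]
    have hintmono : ((Γ * Lm) ^ 2 / (1 + (Γ * Lm) ^ 2)) * (∫ p, F5 Γ p ∂μ2)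
        ≤ Γ ^ 2 * ∫ p, F7 Γ p ∂μ2 := by
      rw [← integral_const_mul, ← integral_const_mul]
      exact integral_mono ((int5 Γ).const_mul _) ((int7 Γ).const_mul _) hkey
    have h1 : 3 * Γ * LamD φ Γ / Lam φ Γ ≤ -(15 * (Γ * Lm) ^ 2 / (1 + (Γ * Lm) ^ 2)) := by
      rw [div_le_iff₀ hLampos, LamDEq Γ, LamEq Γ]
      have h2 : -(15 * (Γ * Lm) ^ 2 / (1 + (Γ * Lm) ^ 2)) * (∫ p, F5 Γ p ∂μ2)
          = -15 * ((Γ * Lm) ^ 2 / (1 + (Γ * Lm) ^ 2) * ∫ p, F5 Γ p ∂μ2) := by ring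
      rw [h2]
      nlinarith [hintmono]
    linarith
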